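/- Let R > 0 and let p_n be the extended Krall–Laguerre polynomials with parameter α = 0. Let μ be the measure on ℝ equal to the restriction of e^{−x} dx to [0, ∞) plus (1/R) times the Dirac measure at 0. Then the p_n are orthogonal with respect to μ: ∫ p_n(x)·p_m(x) dμ(x) = 0 for all n ≠ m. -/
import Mathlib


open Polynomial MeasureTheory

/-- Monic Laguerre polynomials: `L_{-1} = 0`, `L_0 = 1`,
`L_n(x) = (x − (2n−1+α))·L_{n−1}(x) − (n−1)(n−1+α)·L_{n−2}(x)`. -/
noncomputable def Lag (α : ℝ) : ℕ → ℝ[X]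
  | 0 => 1
  | 1 => X - C (1 + α)
  | (n + 2) => (X - C (2 * ((n : ℝ) + 2) - 1 + α)) * Lag α (n + 1)
      - C (((n : ℝ) + 1) * (((n : ℝ) + 1) + α)) * Lag α n

/-- `x_n = α + (2n² + 2(R−1)n − R)/((n−1)+R)`. -/
noncomputable def xKL (α R : ℝ) (n : ℕ) : ℝ :=
  α + (2 * (n : ℝ) ^ 2 + 2 * (R - 1) * (n : ℝ) - R) / (((n : ℝ) - 1) + R)

/-- `y_n = n(n+α)(n+1+R)/(n+R)`. -/
noncomputable def yKL (α R : ℝ) (n : ℕ) : ℝ :=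
  (n : ℝ) * ((n : ℝ) + α) * ((n : ℝ) + 1 + R) / ((n : ℝ) + R)

/-- the moment functional `f ↦ ∑ coeff k * k!` -/
noncomputable def Mf : ℝ[X] →ₗ[ℝ] ℝ :=
  Polynomial.lsum (fun k => LinearMap.toSpanSingleton ℝ ℝ ((k.factorial : ℝ)))

lemma Mf_apply (f : ℝ[X]) : Mf f = f.sum fun k a => a * (k.factorial : ℝ) := by
  simp [Mf, Polynomial.lsum_apply, LinearMap.toSpanSingleton_apply, smul_eq_mul]

lemma Mf_monomial (k : ℕ) (a : ℝ) : Mf (monomial k a) = a * k.factorial := by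
  rw [Mf_apply, Polynomial.sum_monomial_index]
  simp

lemma Mf_X_pow (k : ℕ) : Mf (X ^ k) = k.factorial := by
  rw [← monomial_one_right_eq_X_pow, Mf_monomial, one_mul]

lemma Mf_C_mul (a : ℝ) (f : ℝ[X]) : Mf (C a * f) = a * Mf f := by
  rw [← smul_eq_C_mul, _root_.map_smul, smul_eq_mul]

lemma natID (n k : ℕ) :
    (k+1).factorial * (k+1).descFactorial (n+1)
      = k.factorial * k.descFactorial (n+2)
        + (2*n+3) * (k.factorial * k.descFactorial (n+1))
        + (n+1)^2 * (k.factorial * k.descFactorial n) := by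
  rcases lt_trichotomy k n with h | rfl | h
  · rw [Nat.descFactorial_eq_zero_iff_lt.mpr (by omega),
      Nat.descFactorial_eq_zero_iff_lt.mpr (by omega),
      Nat.descFactorial_eq_zero_iff_lt.mpr (by omega),
      Nat.descFactorial_eq_zero_iff_lt.mpr (by omega)]
    ring
  · rw [Nat.descFactorial_self, Nat.descFactorial_self,
      Nat.descFactorial_eq_zero_iff_lt.mpr (by omega),
      Nat.descFactorial_eq_zero_iff_lt.mpr (by omega)]
    rw [Nat.factorial_succ]
    ring
  · obtain ⟨j, rfl⟩ : ∃ j, k = n + 1 + j := ⟨k - (n+1), by omega⟩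
    rw [Nat.succ_descFactorial_succ]
    rw [show (n+2) = (n+1)+1 from rfl, Nat.descFactorial_succ,
      Nat.descFactorial_succ]
    rw [show n+1+j - (n+1) = j by omega, show n+1+j-n = j+1 by omega]
    rw [show (n+1+j+1) = (n+1+j)+1 from rfl, Nat.factorial_succ]
    ring

lemma Mf_Xpow_Lag : ∀ n k : ℕ, Mf (X ^ k * Lag 0 n)
    = (k.factorial * k.descFactorial n : ℕ) := by
  intro n
  induction n using Nat.twoStepInduction with
  | zero => intro k; simp [Lag, Mf_X_pow]
  | one =>
    intro k
    have : X ^ k * Lag 0 1 = X ^ (k+1) - C 1 * X ^ k := by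
      simp [Lag]; ring
    rw [this, map_sub, Mf_C_mul, Mf_X_pow, Mf_X_pow, Nat.descFactorial_one]
    push_cast [Nat.factorial_succ]
    ring
  | more n ih1 ih2 =>
    intro k
    have hL : X ^ k * Lag 0 (n+2)
        = X ^ (k+1) * Lag 0 (n+1) - C (2 * ((n:ℝ) + 2) - 1 + 0) * (X ^ k * Lag 0 (n+1))
          - C (((n:ℝ)+1) * (((n:ℝ)+1) + 0)) * (X ^ k * Lag 0 n) := by
      show X ^ k * ((X - C (2 * ((n : ℝ) + 2) - 1 + 0)) * Lag 0 (n + 1)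
        - C (((n : ℝ) + 1) * (((n : ℝ) + 1) + 0)) * Lag 0 n) = _
      ring
    rw [hL, map_sub, map_sub, Mf_C_mul, Mf_C_mul, ih2 (k+1), ih2 k, ih1 k]
    have := natID n k
    have h2 : ((k+1).factorial * (k+1).descFactorial (n+1) : ℝ)
        = (k.factorial * k.descFactorial (n+2) : ℕ)
          + (2*(n:ℝ)+3) * (k.factorial * k.descFactorial (n+1) : ℕ)
          + ((n:ℝ)+1)^2 * (k.factorial * k.descFactorial n : ℕ) := by
      exact_mod_cast congrArg (Nat.cast : ℕ → ℝ) this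
    push_cast at h2 ⊢
    linarith

lemma Lag_monic_deg : ∀ n : ℕ, (Lag 0 n).Monic ∧ (Lag 0 n).natDegree = n := by
  intro n
  induction n using Nat.twoStepInduction with
  | zero => simp [Lag, monic_one]
  | one =>
    refine ⟨?_, ?_⟩
    · simpa [Lag] using monic_X_sub_C (1 + 0 : ℝ)
    · rw [show Lag 0 1 = X - C (1 + 0 : ℝ) from rfl, natDegree_X_sub_C]
  | more n ih1 ih2 =>
    obtain ⟨hm1, hd1⟩ := ih2
    obtain ⟨hm0, hd0⟩ := ih1
    have hmul : ((X - C (2 * ((n : ℝ) + 2) - 1 + 0)) * Lag 0 (n + 1)).Monic :=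
      (monic_X_sub_C _).mul hm1
    have hdmul : ((X - C (2 * ((n : ℝ) + 2) - 1 + 0)) * Lag 0 (n + 1)).natDegree = n + 2 := by
      rw [(monic_X_sub_C _).natDegree_mul hm1, natDegree_X_sub_C, hd1]; omega
    have hlt : (C (((n : ℝ) + 1) * (((n : ℝ) + 1) + 0)) * Lag 0 n).degree
        < ((X - C (2 * ((n : ℝ) + 2) - 1 + 0)) * Lag 0 (n + 1)).degree := by
      have h1 : (C (((n : ℝ) + 1) * (((n : ℝ) + 1) + 0)) * Lag 0 n).degree ≤ ((n : ℕ) : WithBot ℕ) := by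
        refine le_trans (degree_mul_le _ _) ?_
        refine le_trans (add_le_add degree_C_le degree_le_natDegree) ?_
        rw [hd0]; simp
      have h2 : ((X - C (2 * ((n : ℝ) + 2) - 1 + 0)) * Lag 0 (n + 1)).degree
          = ((n + 2 : ℕ) : WithBot ℕ) := by
        rw [degree_eq_natDegree hmul.ne_zero, hdmul]
      rw [h2]
      refine lt_of_le_of_lt h1 ?_
      exact_mod_cast (by omega : n < n + 2)
    have hm : (Lag 0 (n+2)).Monic := by
      show ((X - C (2 * ((n : ℝ) + 2) - 1 + 0)) * Lag 0 (n + 1)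
        - C (((n : ℝ) + 1) * (((n : ℝ) + 1) + 0)) * Lag 0 n).Monic
      exact hmul.sub_of_left hlt
    refine ⟨hm, ?_⟩
    show ((X - C (2 * ((n : ℝ) + 2) - 1 + 0)) * Lag 0 (n + 1)
      - C (((n : ℝ) + 1) * (((n : ℝ) + 1) + 0)) * Lag 0 n).natDegree = n + 2
    rw [natDegree_sub_eq_left_of_natDegree_lt, hdmul]
    rw [hdmul]
    refine lt_of_le_of_lt natDegree_mul_le ?_
    rw [natDegree_C, hd0]; omega

lemma Mf_mul_Lag_eq_zero {f : ℝ[X]} {n : ℕ} (h : f.natDegree < n) :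
    Mf (f * Lag 0 n) = 0 := by
  conv_lhs => rw [f.as_sum_range' (f.natDegree + 1) (Nat.lt_succ_self _)]
  rw [Finset.sum_mul, map_sum]
  apply Finset.sum_eq_zero
  intro i hi
  simp only [Finset.mem_range] at hi
  rw [← C_mul_X_pow_eq_monomial, mul_assoc, Mf_C_mul, Mf_Xpow_Lag]
  rw [Nat.descFactorial_eq_zero_iff_lt.mpr (by omega)]
  simp

lemma Mf_Lag_Lag {n m : ℕ} (h : n < m) : Mf (Lag 0 n * Lag 0 m) = 0 :=
  Mf_mul_Lag_eq_zero (by rw [(Lag_monic_deg n).2]; exact h)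

lemma Mf_Lag_sq (n : ℕ) : Mf (Lag 0 n * Lag 0 n) = (n.factorial : ℝ)^2 := by
  have expand : Lag 0 n * Lag 0 n = X ^ n * Lag 0 n + (Lag 0 n - X ^ n) * Lag 0 n := by ring
  have h2 : Mf ((Lag 0 n - X ^ n) * Lag 0 n) = 0 := by
    rcases eq_or_ne (Lag 0 n - X ^ n) 0 with h | h
    · rw [h, zero_mul, map_zero]
    · apply Mf_mul_Lag_eq_zero (n := n)
      rw [natDegree_lt_iff_degree_lt h]
      have hd := degree_sub_lt (p := Lag 0 n) (q := X ^ n)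
        (by rw [degree_X_pow, degree_eq_natDegree (Lag_monic_deg n).1.ne_zero,
          (Lag_monic_deg n).2])
        (Lag_monic_deg n).1.ne_zero
        (by rw [leadingCoeff_X_pow]; exact (Lag_monic_deg n).1)
      rwa [degree_eq_natDegree (Lag_monic_deg n).1.ne_zero, (Lag_monic_deg n).2] at hd
  rw [expand, map_add, Mf_Xpow_Lag, h2, Nat.descFactorial_self]
  push_cast; ring

noncomputable def Dp : ℕ → ℝ[X]
  | 0 => 0
  | (n + 1) => Lag 0 n - C (n : ℝ) * Dp n

lemma X_mul_Dp : ∀ n : ℕ, X * Dp (n+1) = Lag 0 (n+1) + C ((n : ℝ) + 1) * Lag 0 n := by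
  intro n
  induction n with
  | zero =>
    simp only [Dp, Lag, Nat.cast_zero, map_zero, zero_mul, sub_zero, mul_one]
    rw [show ((0:ℝ) + 1) = 1 by norm_num, show ((1:ℝ) + 0) = 1 by norm_num]
    simp
  | succ n ih =>
    have hunf : Dp (n+1+1) = Lag 0 (n+1) - C ((n : ℝ) + 1) * Dp (n+1) := by
      simp only [Dp]; push_cast; ring
    have hrec : Lag 0 (n+2) = (X - C (2 * ((n : ℝ) + 2) - 1 + 0)) * Lag 0 (n + 1)
      - C (((n : ℝ) + 1) * (((n : ℝ) + 1) + 0)) * Lag 0 n := rfl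
    rw [hunf, show ((n:ℕ)+1+1 : ℕ) = n+2 from rfl, hrec]
    rw [mul_sub, mul_comm X (C ((n:ℝ)+1) * Dp (n+1)), mul_assoc, mul_comm (Dp (n+1)) X, ih]
    push_cast
    simp only [map_add, map_mul, map_sub, map_one, map_zero, map_ofNat, Polynomial.C_1]
    ring

lemma Mf_Dp_Lag : ∀ n m : ℕ, n ≤ m → Mf (Dp n * Lag 0 m) = 0 := by
  intro n
  induction n with
  | zero => intro m _; simp [Dp]
  | succ n ih =>
    intro m hm
    have : Dp (n+1) * Lag 0 m = Lag 0 n * Lag 0 m - C (n:ℝ) * (Dp n * Lag 0 m) := by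
      simp only [Dp]; ring
    rw [this, map_sub, Mf_C_mul, Mf_Lag_Lag (by omega), ih m (by omega)]
    ring

lemma Mf_Lag_Dp : ∀ n m : ℕ, n < m →
    Mf (Lag 0 n * Dp m) = (-1)^(m-1-n) * (n.factorial : ℝ) * ((m-1).factorial : ℝ) := by
  intro n m hnm
  induction m, hnm using Nat.le_induction with
  | base =>
    have : Lag 0 n * Dp (n+1) = Lag 0 n * Lag 0 n - C (n:ℝ) * (Dp n * Lag 0 n) := by
      simp only [Dp]; ring
    rw [this, map_sub, Mf_C_mul, Mf_Lag_sq, Mf_Dp_Lag n n le_rfl]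
    simp; ring
  | succ m hm ih =>
    obtain ⟨k, rfl⟩ : ∃ k, m = n + 1 + k := ⟨m - (n+1), by omega⟩
    have : Lag 0 n * Dp (n+1+k+1)
        = Lag 0 n * Lag 0 (n+1+k) - C ((n+1+k : ℕ) : ℝ) * (Lag 0 n * Dp (n+1+k)) := by
      simp only [Dp]; push_cast; ring
    rw [this, map_sub, Mf_C_mul, Mf_Lag_Lag (by omega), ih]
    rw [show n+1+k-1-n = k by omega, show n+1+k+1-1-n = k+1 by omega,
      show n+1+k+1-1 = (n+k)+1 from by omega, show n+1+k-1 = n+k from by omega,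
      Nat.factorial_succ, pow_succ]
    push_cast
    ring

lemma Mf_Dp_sq : ∀ n : ℕ, Mf (Dp n * Dp n) = (n : ℝ) * (((n-1).factorial : ℕ) : ℝ)^2 := by
  intro n
  induction n with
  | zero => simp [Dp]
  | succ n ih =>
    have : Dp (n+1) * Dp (n+1) = Lag 0 n * Lag 0 n - C (n:ℝ) * (Dp n * Lag 0 n)
        - C (n:ℝ) * (Dp n * Lag 0 n) + C (n:ℝ) * (C (n:ℝ) * (Dp n * Dp n)) := by
      simp only [Dp]; ring
    rw [this, map_add, map_sub, map_sub, Mf_C_mul, Mf_C_mul, Mf_C_mul,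
      Mf_Lag_sq, Mf_Dp_Lag n n le_rfl, ih]
    cases n with
    | zero => simp
    | succ k =>
      rw [show (k+1+1-1 : ℕ) = k+1 from rfl, show (k+1-1 : ℕ) = k from rfl,
        Nat.factorial_succ]
      push_cast
      ring

lemma Mf_Dp_Dp : ∀ n m : ℕ, n < m → Mf (Dp n * Dp m)
    = (-1)^(m-n) * (n : ℝ) * (((n-1).factorial : ℕ) : ℝ) * (((m-1).factorial : ℕ) : ℝ) := by
  intro n m hnm
  induction m, hnm using Nat.le_induction with
  | base =>
    have : Dp n * Dp (n+1) = Dp n * Lag 0 n - C (n:ℝ) * (Dp n * Dp n) := by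
      simp only [Dp]; ring
    rw [this, map_sub, Mf_C_mul, Mf_Dp_Lag n n le_rfl, Mf_Dp_sq]
    cases n with
    | zero => simp
    | succ k =>
      rw [show (k+1+1-1 : ℕ) = k+1 from rfl, show (k+1-1 : ℕ) = k from rfl,
        Nat.factorial_succ, show ((k+1).succ - (k+1) : ℕ) = 1 by omega]
      push_cast
      ring
  | succ m hm ih =>
    obtain ⟨k, rfl⟩ : ∃ k, m = n + 1 + k := ⟨m - (n+1), by omega⟩
    have : Dp n * Dp (n+1+k+1)
        = Dp n * Lag 0 (n+1+k) - C ((n+1+k : ℕ) : ℝ) * (Dp n * Dp (n+1+k)) := by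
      simp only [Dp]; push_cast; ring
    rw [this, map_sub, Mf_C_mul, Mf_Dp_Lag n (n+1+k) (by omega), ih]
    rw [show n+1+k-n = k+1 by omega, show n+1+k+1-n = k+2 by omega,
      show n+1+k+1-1 = (n+k)+1 from by omega, show n+1+k-1 = n+k from by omega,
      Nat.factorial_succ, pow_succ, pow_succ]
    push_cast
    ring

lemma eval_Lag : ∀ n : ℕ, (Lag 0 n).eval 0 = (-1)^n * (n.factorial : ℝ) := by
  intro n
  induction n using Nat.twoStepInduction with
  | zero => simp [Lag]
  | one => simp [Lag]
  | more n ih1 ih2 =>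
    have hrec : Lag 0 (n+2) = (X - C (2 * ((n : ℝ) + 2) - 1 + 0)) * Lag 0 (n + 1)
      - C (((n : ℝ) + 1) * (((n : ℝ) + 1) + 0)) * Lag 0 n := rfl
    rw [hrec]
    simp only [eval_sub, eval_mul, eval_X, eval_C, ih1, ih2]
    rw [Nat.factorial_succ (n+1), Nat.factorial_succ n, pow_succ, pow_succ]
    push_cast
    ring

lemma eval_Dp : ∀ n : ℕ, (Dp (n+1)).eval 0 = (-1)^n * ((n+1).factorial : ℝ) := by
  intro n
  induction n with
  | zero => simp [Dp, Lag]
  | succ n ih =>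
    have : Dp (n+1+1) = Lag 0 (n+1) - C (((n+1 : ℕ)) : ℝ) * Dp (n+1) := by
      simp only [Dp]
    rw [this]
    simp only [eval_sub, eval_mul, eval_C, ih, eval_Lag]
    rw [Nat.factorial_succ (n+1), pow_succ]
    push_cast
    ring

lemma integrable_poly_exp (f : ℝ[X]) :
    IntegrableOn (fun x => Real.exp (-x) * f.eval x) (Set.Ici (0:ℝ)) := by
  induction f using Polynomial.induction_on' with
  | add p q hp hq =>
    refine MeasureTheory.IntegrableOn.congr_fun (hp.add hq) ?_ measurableSet_Ici
    intro x _
    simp [mul_add]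
  | monomial k a =>
    rw [integrableOn_Ici_iff_integrableOn_Ioi]
    have h1 := (Real.GammaIntegral_convergent (s := (k:ℝ)+1) (by positivity))
    have h2 : ((k:ℝ) + 1 - 1) = (k:ℝ) := by ring
    rw [h2] at h1
    have h3 := h1.const_mul a
    refine MeasureTheory.IntegrableOn.congr_fun h3 ?_ measurableSet_Ioi
    intro x _
    simp [Real.rpow_natCast]
    ring

lemma integral_Mf (f : ℝ[X]) :
    ∫ x in Set.Ici (0:ℝ), Real.exp (-x) * f.eval x = Mf f := by
  induction f using Polynomial.induction_on' with
  | add p q hp hq =>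
    rw [map_add, ← hp, ← hq, ← integral_add (integrable_poly_exp p) (integrable_poly_exp q)]
    apply setIntegral_congr_fun measurableSet_Ici
    intro x _
    simp [mul_add]
  | monomial k a =>
    rw [Mf_monomial]
    rw [MeasureTheory.integral_Ici_eq_integral_Ioi]
    have hG := Real.Gamma_eq_integral (s := (k:ℝ)+1) (by positivity)
    have h2 : ∫ x in Set.Ioi (0:ℝ), Real.exp (-x) * (monomial k a).eval x
        = a * ∫ x in Set.Ioi (0:ℝ), Real.exp (-x) * x ^ ((k:ℝ) + 1 - 1) := by
      rw [← integral_const_mul]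
      apply setIntegral_congr_fun measurableSet_Ioi
      intro x _
      have h4 : ((k:ℝ) + 1 - 1) = ((k:ℕ):ℝ) := by push_cast; ring
      simp only [h4, Real.rpow_natCast, eval_monomial]
      ring
    rw [h2, ← hG, ← Real.Gamma_nat_eq_factorial]

lemma p_formula (R : ℝ) (hR : 0 < R) (p : ℕ → ℝ[X])
    (hp : ∀ n : ℕ, X * p n = Lag 0 (n + 1) + C (xKL 0 R (n + 1)) * Lag 0 n
      + C (yKL 0 R n) * (if n = 0 then 0 else Lag 0 (n - 1))) (n : ℕ) :
    p n = Lag 0 n + C ((n:ℝ)/((n:ℝ)+R)) * Dp n := by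
  have hXne : (X : ℝ[X]) ≠ 0 := X_ne_zero
  apply mul_left_cancel₀ hXne
  rw [hp n]
  cases n with
  | zero =>
    have hx : xKL 0 R 1 = 1 := by
      simp only [xKL, Nat.cast_one]
      rw [show ((1:ℝ) - 1 + R) = R by ring]
      field_simp
      ring
    have hy : yKL 0 R 0 = 0 := by simp [yKL]
    simp only [hx, hy, if_pos rfl, map_zero, map_one, zero_mul, mul_zero, add_zero,
      Nat.cast_zero, zero_div, Dp]
    show (X - C (1 + 0 : ℝ)) + 1 * 1 = X * 1
    rw [map_add, map_one, map_zero]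
    ring
  | succ k =>
    have hden : ((k:ℝ) + 1 + R) ≠ 0 := by positivity
    have hx : xKL 0 R (k+2) = (2 * ((k : ℝ) + 2) - 1 + 0) + ((k:ℝ)+1)/((k:ℝ)+1+R) := by
      simp only [xKL]
      push_cast
      rw [show ((k:ℝ) + 2 - 1 + R) = (k:ℝ) + 1 + R by ring]
      field_simp
      ring
    have hy : yKL 0 R (k+1)
        = ((k : ℝ) + 1) * (((k : ℝ) + 1) + 0) + ((k:ℝ)+1)/((k:ℝ)+1+R) * ((k:ℝ)+1) := by
      simp only [yKL]
      push_cast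
      field_simp
      ring
    have hif : (if k + 1 = 0 then (0 : ℝ[X]) else Lag 0 (k+1-1)) = Lag 0 k := by simp
    rw [hif, hx, hy]
    have hrec : Lag 0 (k+2) = (X - C (2 * ((k : ℝ) + 2) - 1 + 0)) * Lag 0 (k + 1)
      - C (((k : ℝ) + 1) * (((k : ℝ) + 1) + 0)) * Lag 0 k := rfl
    have hDp := X_mul_Dp k
    have hcast : ((k+1 : ℕ) : ℝ) = (k:ℝ) + 1 := by push_cast; ring
    have hRHS : X * (Lag 0 (k+1) + C (((k+1:ℕ):ℝ)/(((k+1:ℕ):ℝ)+R)) * Dp (k+1))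
        = X * Lag 0 (k+1) + C (((k+1:ℕ):ℝ)/(((k+1:ℕ):ℝ)+R)) * (X * Dp (k+1)) := by ring
    rw [hrec, hRHS, hDp, hcast]
    simp only [map_add, map_sub, map_mul, map_one, map_zero, map_ofNat]
    ring

lemma eval_p (R : ℝ) (hR : 0 < R) (n : ℕ) :
    (Lag 0 n + C ((n:ℝ)/((n:ℝ)+R)) * Dp n).eval 0
      = (-1)^n * (n.factorial : ℝ) * R / ((n:ℝ)+R) := by
  have hRne : R ≠ 0 := ne_of_gt hR
  cases n with
  | zero =>
    simp [Dp, Lag]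
    field_simp
  | succ k =>
    have hden : ((k:ℝ) + 1 + R) ≠ 0 := by positivity
    simp only [eval_add, eval_mul, eval_C, eval_Lag, eval_Dp]
    push_cast
    rw [pow_succ]
    field_simp
    ring

lemma Mf_pp (R : ℝ) (hR : 0 < R) {n m : ℕ} (h : n < m) :
    Mf ((Lag 0 n + C ((n:ℝ)/((n:ℝ)+R)) * Dp n) * (Lag 0 m + C ((m:ℝ)/((m:ℝ)+R)) * Dp m))
      + (1/R) * (((-1)^n * (n.factorial : ℝ) * R / ((n:ℝ)+R))
          * ((-1)^m * (m.factorial : ℝ) * R / ((m:ℝ)+R))) = 0 := by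
  have hRne : R ≠ 0 := ne_of_gt hR
  have hexp : (Lag 0 n + C ((n:ℝ)/((n:ℝ)+R)) * Dp n) * (Lag 0 m + C ((m:ℝ)/((m:ℝ)+R)) * Dp m)
      = Lag 0 n * Lag 0 m + C ((m:ℝ)/((m:ℝ)+R)) * (Lag 0 n * Dp m)
        + C ((n:ℝ)/((n:ℝ)+R)) * (Dp n * Lag 0 m)
        + C ((n:ℝ)/((n:ℝ)+R)) * (C ((m:ℝ)/((m:ℝ)+R)) * (Dp n * Dp m)) := by ring
  rw [hexp, map_add, map_add, map_add, Mf_C_mul, Mf_C_mul, Mf_C_mul, Mf_C_mul,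
    Mf_Lag_Lag h, Mf_Lag_Dp n m h, Mf_Dp_Lag n m (le_of_lt h), Mf_Dp_Dp n m h]
  obtain ⟨k, rfl⟩ : ∃ k, m = n + 1 + k := ⟨m - (n+1), by omega⟩
  rw [show n+1+k-1-n = k by omega, show n+1+k-n = k+1 by omega,
    show n+1+k-1 = n+k by omega]
  have hsgn : ((-1:ℝ))^n * ((-1:ℝ))^(n+1+k) = (-1:ℝ)^k * (-1) := by
    rw [← pow_add, show n+(n+1+k) = 2*n+(k+1) by ring, pow_add, pow_mul, neg_one_sq,
      one_pow, one_mul, pow_succ]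
  have hfac : (((n+1+k).factorial : ℕ) : ℝ)
      = (((n+1+k) : ℕ) : ℝ) * (((n+k).factorial : ℕ) : ℝ) := by
    rw [show n+1+k = (n+k)+1 by omega, Nat.factorial_succ]
    push_cast; ring
  have ht : ∀ A B Cc Dd : ℝ, ((-1:ℝ)^n * A * R / Cc) * ((-1:ℝ)^(n+1+k) * B * R / Dd)
      = ((-1:ℝ)^k * (-1)) * ((A * R / Cc) * (B * R / Dd)) := by
    intro A B Cc Dd
    rw [← hsgn]; ring
  rw [ht ((n.factorial : ℕ) : ℝ) (((n+1+k).factorial : ℕ) : ℝ) ((n:ℝ)+R)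
    ((((n+1+k) : ℕ) : ℝ)+R), hfac, pow_succ]
  cases n with
  | zero =>
    have d1 : ((0:ℝ)) + R ≠ 0 := by simpa using hRne
    have d2 : ((0:ℝ)) + 1 + (k:ℝ) + R ≠ 0 := by positivity
    push_cast
    field_simp
    ring
  | succ j =>
    have d1 : ((j:ℝ)) + 1 + R ≠ 0 := by positivity
    have d2 : ((j:ℝ)) + 1 + 1 + (k:ℝ) + R ≠ 0 := by positivity
    rw [show (j+1-1:ℕ) = j from rfl, Nat.factorial_succ j]
    push_cast
    field_simp
    ring

lemma integral_mu (R : ℝ) (hR : 0 < R) (f : ℝ[X]) :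
    ∫ x, f.eval x ∂((volume.restrict (Set.Ici (0 : ℝ))).withDensity
            (fun x => ENNReal.ofReal (Real.exp (-x)))
          + (ENNReal.ofReal (1 / R)) • Measure.dirac (0 : ℝ))
      = Mf f + (1/R) * f.eval 0 := by
  have hFm : Measurable fun x : ℝ => (Real.exp (-x)).toNNReal :=
    (continuous_real_toNNReal.comp (Real.continuous_exp.comp continuous_neg)).measurable
  have hgc : Continuous fun x : ℝ => f.eval x := f.continuous_aeval
  have hid : (fun x : ℝ => ENNReal.ofReal (Real.exp (-x)))
      = fun x : ℝ => (((Real.exp (-x)).toNNReal) : ENNReal) := rfl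
  have hsmul : (fun x : ℝ => (Real.exp (-x)).toNNReal • f.eval x)
      = fun x : ℝ => Real.exp (-x) * f.eval x := by
    funext x
    rw [NNReal.smul_def, Real.coe_toNNReal _ (Real.exp_pos _).le]
    rfl
  have hint1 : Integrable (fun x => f.eval x)
      ((volume.restrict (Set.Ici (0:ℝ))).withDensity fun x => ENNReal.ofReal (Real.exp (-x))) := by
    rw [hid, integrable_withDensity_iff_integrable_smul hFm, hsmul]
    exact integrable_poly_exp f
  have hint2 : Integrable (fun x => f.eval x) ((ENNReal.ofReal (1/R)) • Measure.dirac (0:ℝ)) := by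
    refine Integrable.smul_measure ⟨hgc.aestronglyMeasurable, ?_⟩ ENNReal.ofReal_ne_top
    rw [MeasureTheory.HasFiniteIntegral]
    rw [MeasureTheory.lintegral_dirac]
    exact ENNReal.coe_lt_top
  rw [integral_add_measure hint1 hint2]
  congr 1
  · rw [hid, integral_withDensity_eq_integral_smul hFm, hsmul]
    exact integral_Mf f
  · rw [integral_smul_measure, integral_dirac, ENNReal.toReal_ofReal (by positivity),
      smul_eq_mul]

theorem stmt12 (R : ℝ) (hR : 0 < R)
    (p : ℕ → ℝ[X])
    (hp : ∀ n : ℕ, X * p n = Lag 0 (n + 1) + C (xKL 0 R (n + 1)) * Lag 0 n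
      + C (yKL 0 R n) * (if n = 0 then 0 else Lag 0 (n - 1))) :
    ∀ n m : ℕ, n ≠ m →
      ∫ x, (p n).eval x * (p m).eval x
        ∂((volume.restrict (Set.Ici (0 : ℝ))).withDensity
            (fun x => ENNReal.ofReal (Real.exp (-x)))
          + (ENNReal.ofReal (1 / R)) • Measure.dirac (0 : ℝ)) = 0 := by
  have key : ∀ a b : ℕ, a < b →
      ∫ x, (p a).eval x * (p b).eval x
        ∂((volume.restrict (Set.Ici (0 : ℝ))).withDensity
            (fun x => ENNReal.ofReal (Real.exp (-x)))
          + (ENNReal.ofReal (1 / R)) • Measure.dirac (0 : ℝ)) = 0 := by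
    intro a b hab
    have heq : (fun x => (p a).eval x * (p b).eval x) = fun x => (p a * p b).eval x := by
      funext x; rw [eval_mul]
    rw [heq, integral_mu R hR (p a * p b), eval_mul,
      p_formula R hR p hp a, p_formula R hR p hp b, eval_p R hR a, eval_p R hR b]
    exact Mf_pp R hR hab
  intro n m hnm
  rcases hnm.lt_or_gt with h | h
  · exact key n m h
  · rw [show (fun x => (p n).eval x * (p m).eval x)
      = fun x => (p m).eval x * (p n).eval x from funext fun x => mul_comm _ _]
    exact key m n h
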